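/- Let X, Y have uniformly bounded second moments over a set of probability measures 𝒫, and set U = (X+Y)/2, V = (X−Y)/2, Ē[Z] = sup_{P∈𝒫} E_P[Z]. Then the upper covariance C̄(X,Y) = sup_{P∈conv(𝒫)} Cov_P(X,Y) equals sup over β ∈ ℝ of inf over α ∈ ℝ of Ē[(U−α)² − (V−β)²]. In particular, taking Y = X gives C̄(X,X) = V̄(X), the upper variance. -/

import Mathlib

/-!
For a probability measure `Q`, the integrand `(U - α)² - (V - β)²` equals
`α² - 2αU + c_β` with `c_β = XY + β(X - Y) - β²`, a monic quadratic in `α` whose coefficients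
`(E_Q[U], E_Q[c_β])` depend linearly on `Q`. Suprema of integrals over `𝒫` and over its convex
hull agree, and over the convex hull these coefficient pairs fill a bounded convex set `C ⊆ ℝ²`.
For such `C`, `inf_α sup_C (α² - 2αm + c) = sup_C (c - m²)`: if `x` is an `ε`-maximiser of the
concave function `c - m²` on `C`, comparing with points on segments from `x` shows that `α = x.1`
attains the supremum up to `O(√ε)`. Finally `c_β - m² = Cov_Q(X, Y) - (E_Q[V] - β)²`, and the
supremum over `β` removes the square. The variance case is the same argument for
`(X - μ)² = μ² - 2μX + X²`.
-/

open MeasureTheory ENNReal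

variable {Ω : Type*} [MeasurableSpace Ω]

/-- Classical covariance of `X` and `Y` under `P`. -/
noncomputable def covP (P : Measure Ω) (X Y : Ω → ℝ) : ℝ :=
  (∫ ω, X ω * Y ω ∂P) - (∫ ω, X ω ∂P) * (∫ ω, Y ω ∂P)

/-- Classical variance of `X` under `P`. -/
noncomputable def varP (P : Measure Ω) (X : Ω → ℝ) : ℝ :=
  (∫ ω, (X ω) ^ 2 ∂P) - (∫ ω, X ω ∂P) ^ 2

/-- The convex hull of a set of measures: all finite convex combinations. -/
def convHullP (S : Set (Measure Ω)) : Set (Measure Ω) :=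
  { Q | ∃ (n : ℕ) (w : Fin n → ℝ≥0∞) (P : Fin n → Measure Ω),
      (∑ i, w i = 1) ∧ (∀ i, P i ∈ S) ∧ Q = ∑ i, w i • P i }

section ConvHull

open Finset

variable {S : Set (Measure Ω)}

lemma subset_convHullP : S ⊆ convHullP S := fun P hP =>
  ⟨1, fun _ => 1, fun _ => P, by simp, fun _ => hP, by simp⟩

lemma smul_add_smul_mem_convHullP {Q₁ Q₂ : Measure Ω} (h₁ : Q₁ ∈ convHullP S)
    (h₂ : Q₂ ∈ convHullP S) {a b : ℝ≥0∞} (hab : a + b = 1) : a • Q₁ + b • Q₂ ∈ convHullP S := by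
  obtain ⟨n₁, w₁, P₁, hw₁, hP₁, rfl⟩ := h₁
  obtain ⟨n₂, w₂, P₂, hw₂, hP₂, rfl⟩ := h₂
  refine ⟨n₁ + n₂, Fin.append (a • w₁) (b • w₂), Fin.append P₁ P₂, ?_, ?_, ?_⟩
  · simp [Fin.sum_univ_add, ← mul_sum, hw₁, hw₂, hab]
  · exact Fin.addCases (by simpa using hP₁) (by simpa using hP₂)
  · simp [Fin.sum_univ_add, smul_sum, smul_smul]

lemma isProbabilityMeasure_of_mem_convHullP (hprob : ∀ P ∈ S, IsProbabilityMeasure P)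
    {Q : Measure Ω} (hQ : Q ∈ convHullP S) : IsProbabilityMeasure Q := by
  obtain ⟨n, w, P, hw, hP, rfl⟩ := hQ
  have := fun i => hprob _ (hP i)
  exact ⟨by simp [hw]⟩

lemma ne_top_of_sum_eq_one {n : ℕ} {w : Fin n → ℝ≥0∞} (hw : ∑ i, w i = 1) (i : Fin n) :
    w i ≠ ∞ :=
  ENNReal.sum_ne_top.1 (hw ▸ one_ne_top) i (mem_univ i)

lemma integrable_of_mem_convHullP {f : Ω → ℝ} (hf : ∀ P ∈ S, Integrable f P)
    {Q : Measure Ω} (hQ : Q ∈ convHullP S) : Integrable f Q := by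
  obtain ⟨n, w, P, hw, hP, rfl⟩ := hQ
  exact integrable_finsetSum_measure.2 fun i _ =>
    (hf _ (hP i)).smul_measure (ne_top_of_sum_eq_one hw i)

lemma integral_le_of_mem_convHullP {f : Ω → ℝ} (hf : ∀ P ∈ S, Integrable f P) {r : ℝ}
    (hr : ∀ P ∈ S, ∫ ω, f ω ∂P ≤ r) {Q : Measure Ω} (hQ : Q ∈ convHullP S) :
    ∫ ω, f ω ∂Q ≤ r := by
  obtain ⟨n, w, P, hw, hP, rfl⟩ := hQ
  have hw' := ne_top_of_sum_eq_one hw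
  rw [integral_finsetSum_measure fun i _ => (hf _ (hP i)).smul_measure (hw' i)]
  calc ∑ i, ∫ ω, f ω ∂(w i • P i) = ∑ i, (w i).toReal * ∫ ω, f ω ∂P i := by
        simp [integral_smul_measure]
    _ ≤ ∑ i, (w i).toReal * r :=
        sum_le_sum fun i _ => mul_le_mul_of_nonneg_left (hr _ (hP i)) toReal_nonneg
    _ = r := by rw [← sum_mul, ← toReal_sum fun i _ => hw' i, hw, toReal_one, one_mul]

lemma abs_integral_le_of_mem_convHullP {f : Ω → ℝ} (hf : ∀ P ∈ S, Integrable f P) {r : ℝ}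
    (hr : ∀ P ∈ S, |∫ ω, f ω ∂P| ≤ r) {Q : Measure Ω} (hQ : Q ∈ convHullP S) :
    |∫ ω, f ω ∂Q| ≤ r := by
  have h := integral_le_of_mem_convHullP (f := fun ω => -f ω) (fun P hP => (hf P hP).neg)
    (fun P hP => by rw [integral_neg]; exact neg_le.1 (neg_le_of_abs_le (hr P hP))) hQ
  rw [integral_neg] at h
  exact abs_le.2 ⟨neg_le.1 h,
    integral_le_of_mem_convHullP hf (fun P hP => le_of_abs_le (hr P hP)) hQ⟩

lemma integral_smul_add_smul_measure {μ ν : Measure Ω} {f : Ω → ℝ} (hμ : Integrable f μ)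
    (hν : Integrable f ν) {a b : ℝ≥0∞} (ha : a ≠ ∞) (hb : b ≠ ∞) :
    ∫ ω, f ω ∂(a • μ + b • ν) = a.toReal * ∫ ω, f ω ∂μ + b.toReal * ∫ ω, f ω ∂ν := by
  rw [integral_add_measure (hμ.smul_measure ha) (hν.smul_measure hb), integral_smul_measure,
    integral_smul_measure, smul_eq_mul, smul_eq_mul]

lemma convex_image_integral_prod_convHullP {f g : Ω → ℝ} (hf : ∀ P ∈ S, Integrable f P)
    (hg : ∀ P ∈ S, Integrable g P) :
    Convex ℝ ((fun Q => (∫ ω, f ω ∂Q, ∫ ω, g ω ∂Q)) '' convHullP S) := by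
  rintro _ ⟨Q₁, h₁, rfl⟩ _ ⟨Q₂, h₂, rfl⟩ a b ha hb hab
  refine ⟨ENNReal.ofReal a • Q₁ + ENNReal.ofReal b • Q₂, smul_add_smul_mem_convHullP h₁ h₂
    (by rw [← ofReal_add ha hb, hab, ofReal_one]), ?_⟩
  simp only [integral_smul_add_smul_measure (integrable_of_mem_convHullP hf h₁)
    (integrable_of_mem_convHullP hf h₂) ofReal_ne_top ofReal_ne_top,
    integral_smul_add_smul_measure (integrable_of_mem_convHullP hg h₁)
    (integrable_of_mem_convHullP hg h₂) ofReal_ne_top ofReal_ne_top, toReal_ofReal ha,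
    toReal_ofReal hb, Prod.smul_mk, Prod.mk_add_mk, smul_eq_mul]

lemma upperBounds_image_integral_convHullP {f : Ω → ℝ} (hf : ∀ P ∈ S, Integrable f P) :
    upperBounds ((fun P => ∫ ω, f ω ∂P) '' convHullP S) =
      upperBounds ((fun P => ∫ ω, f ω ∂P) '' S) := by
  refine (upperBounds_mono_set (Set.image_mono subset_convHullP)).antisymm ?_
  rintro r hr _ ⟨Q, hQ, rfl⟩
  exact integral_le_of_mem_convHullP hf (fun P hP => hr ⟨P, hP, rfl⟩) hQ

lemma sSup_image_integral_convHullP (hS : S.Nonempty) {f : Ω → ℝ}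
    (hf : ∀ P ∈ S, Integrable f P) :
    sSup ((fun P => ∫ ω, f ω ∂P) '' convHullP S) = sSup ((fun P => ∫ ω, f ω ∂P) '' S) := by
  have hub := upperBounds_image_integral_convHullP hf
  by_cases hbdd : BddAbove ((fun P => ∫ ω, f ω ∂P) '' S)
  · have hlub : IsLUB ((fun P => ∫ ω, f ω ∂P) '' convHullP S)
        (sSup ((fun P => ∫ ω, f ω ∂P) '' S)) := by
      simpa only [IsLUB, hub] using isLUB_csSup (hS.image _) hbdd
    exact hlub.csSup_eq ((hS.mono subset_convHullP).image _)
  · have hbdd' : ¬BddAbove ((fun P => ∫ ω, f ω ∂P) '' convHullP S) := by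
      rwa [BddAbove, hub]
    rw [Real.sSup_of_not_bddAbove hbdd, Real.sSup_of_not_bddAbove hbdd']

end ConvHull

section Quadratic

variable {C : Set (ℝ × ℝ)}

lemma mul_sub_le_of_almost_max (hC : Convex ℝ C) {x y : ℝ × ℝ} (hx : x ∈ C) (hy : y ∈ C) {ε : ℝ}
    (hε : ∀ z ∈ C, z.2 - z.1 ^ 2 ≤ x.2 - x.1 ^ 2 + ε) {t : ℝ} (ht₀ : 0 ≤ t) (ht₁ : t ≤ 1) :
    t * ((x.1 ^ 2 - 2 * x.1 * y.1 + y.2) - (x.2 - x.1 ^ 2)) ≤ ε + t ^ 2 * (y.1 - x.1) ^ 2 := by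
  have h := hε _ (hC hx hy (sub_nonneg.2 ht₁) ht₀ (sub_add_cancel 1 t))
  simp only [Prod.fst_add, Prod.snd_add, Prod.smul_fst, Prod.smul_snd, smul_eq_mul] at h
  linear_combination h

theorem iInf_sSup_image_quadratic (hC : Convex ℝ C) (hne : C.Nonempty) {R : ℝ}
    (hR : ∀ x ∈ C, |x.1| ≤ R ∧ x.2 ≤ R) :
    ⨅ α : ℝ, sSup ((fun x : ℝ × ℝ => α ^ 2 - 2 * α * x.1 + x.2) '' C) =
      sSup ((fun x : ℝ × ℝ => x.2 - x.1 ^ 2) '' C) := by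
  set g : ℝ × ℝ → ℝ := fun x => x.2 - x.1 ^ 2
  have hg : BddAbove (g '' C) := ⟨R, by
    rintro _ ⟨x, hx, rfl⟩
    linarith [(hR x hx).2, sq_nonneg x.1]⟩
  have hφ (α : ℝ) : BddAbove ((fun x : ℝ × ℝ => α ^ 2 - 2 * α * x.1 + x.2) '' C) :=
    ⟨α ^ 2 + 2 * |α| * R + R, by
      rintro _ ⟨x, hx, rfl⟩
      have h := abs_le.1 ((abs_mul α x.1).trans_le
        (mul_le_mul_of_nonneg_left (hR x hx).1 (abs_nonneg α)))
      linarith [(hR x hx).2]⟩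
  have hlower (α : ℝ) :
      sSup (g '' C) ≤ sSup ((fun x : ℝ × ℝ => α ^ 2 - 2 * α * x.1 + x.2) '' C) := by
    refine csSup_le (hne.image g) ?_
    rintro _ ⟨x, hx, rfl⟩
    exact le_csSup_of_le (hφ α) ⟨x, hx, rfl⟩ (by nlinarith [sq_nonneg (α - x.1)])
  refine le_antisymm (le_of_forall_pos_le_add fun η hη => ?_) (le_ciInf hlower)
  -- `α = x.1` for a `t * η / 2`-maximiser `x` of `g`; `t` balances the two error terms of
  -- `mul_sub_le_of_almost_max`.
  set D := 4 * R ^ 2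
  have hD : 0 ≤ D := by positivity
  set t := η / (2 * D + η)
  have ht₀ : 0 < t := by positivity
  have ht₁ : t ≤ 1 := (div_le_one (by positivity)).2 (by linarith)
  have htD : t * D ≤ η / 2 := by
    rw [div_mul_eq_mul_div, div_le_div_iff₀ (by positivity) two_pos]
    nlinarith
  obtain ⟨_, ⟨x, hx, rfl⟩, hxε⟩ :=
    exists_lt_of_lt_csSup (hne.image g)
      (sub_lt_self (sSup (g '' C)) (by positivity : 0 < t * η / 2))
  have hmax : ∀ z ∈ C, g z ≤ g x + t * η / 2 := fun z hz =>
    (le_csSup hg ⟨z, hz, rfl⟩).trans (by linarith)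
  refine ciInf_le_of_le ⟨_, Set.forall_mem_range.2 hlower⟩ x.1 (csSup_le (hne.image _) ?_)
  rintro _ ⟨y, hy, rfl⟩
  have hfirst := mul_sub_le_of_almost_max hC hx hy hmax ht₀.le ht₁
  have hdist : (y.1 - x.1) ^ 2 ≤ D := by
    have h1 := abs_le.1 (hR x hx).1
    have h2 := abs_le.1 (hR y hy).1
    nlinarith
  have hslope : (x.1 ^ 2 - 2 * x.1 * y.1 + y.2) - g x ≤ η := by
    refine le_of_mul_le_mul_left ?_ ht₀
    nlinarith [mul_le_mul_of_nonneg_left hdist (sq_nonneg t), mul_le_mul_of_nonneg_left htD ht₀.le]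
  linarith [le_csSup hg ⟨x, hx, rfl⟩]

end Quadratic

lemma iSup_sSup_image_sub_sq {ι : Type*} {s : Set ι} (hs : s.Nonempty) {f : ι → ℝ}
    (hf : BddAbove (f '' s)) (g : ι → ℝ) :
    ⨆ β : ℝ, sSup ((fun i => f i - (g i - β) ^ 2) '' s) = sSup (f '' s) := by
  have hle (β : ℝ) (i : ι) (hi : i ∈ s) : f i - (g i - β) ^ 2 ≤ sSup (f '' s) :=
    (sub_le_self _ (sq_nonneg _)).trans (le_csSup hf ⟨i, hi, rfl⟩)
  have hsup (β : ℝ) : sSup ((fun i => f i - (g i - β) ^ 2) '' s) ≤ sSup (f '' s) :=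
    csSup_le (hs.image _) (by rintro _ ⟨i, hi, rfl⟩; exact hle β i hi)
  refine le_antisymm (ciSup_le hsup) (csSup_le (hs.image f) ?_)
  rintro _ ⟨i, hi, rfl⟩
  calc f i = f i - (g i - g i) ^ 2 := by ring
    _ ≤ sSup ((fun j => f j - (g j - g i) ^ 2) '' s) :=
        le_csSup ⟨_, by rintro _ ⟨j, hj, rfl⟩; exact hle (g i) j hj⟩ ⟨i, hi, rfl⟩
    _ ≤ ⨆ β : ℝ, sSup ((fun j => f j - (g j - β) ^ 2) '' s) :=
        le_ciSup (f := fun β => sSup ((fun j => f j - (g j - β) ^ 2) '' s))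
          ⟨_, Set.forall_mem_range.2 hsup⟩ (g i)

theorem iInf_sSup_image_integral_quadratic {S : Set (Measure Ω)} (hS : S.Nonempty)
    (hprob : ∀ P ∈ S, IsProbabilityMeasure P) {m c : Ω → ℝ} (hm : ∀ P ∈ S, Integrable m P)
    (hc : ∀ P ∈ S, Integrable c P) {R : ℝ}
    (hR : ∀ P ∈ S, |∫ ω, m ω ∂P| ≤ R ∧ ∫ ω, c ω ∂P ≤ R) :
    ⨅ α : ℝ, sSup ((fun P => ∫ ω, (α ^ 2 - 2 * α * m ω + c ω) ∂P) '' S) =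
      sSup ((fun Q => ∫ ω, c ω ∂Q - (∫ ω, m ω ∂Q) ^ 2) '' convHullP S) := by
  set C := (fun Q => (∫ ω, m ω ∂Q, ∫ ω, c ω ∂Q)) '' convHullP S
  have hC : ∀ x ∈ C, |x.1| ≤ R ∧ x.2 ≤ R := by
    rintro _ ⟨Q, hQ, rfl⟩
    exact ⟨abs_integral_le_of_mem_convHullP hm (fun P hP => (hR P hP).1) hQ,
      integral_le_of_mem_convHullP hc (fun P hP => (hR P hP).2) hQ⟩
  have hsup (α : ℝ) : sSup ((fun P => ∫ ω, (α ^ 2 - 2 * α * m ω + c ω) ∂P) '' S) =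
      sSup ((fun x : ℝ × ℝ => α ^ 2 - 2 * α * x.1 + x.2) '' C) := by
    have hint : ∀ P ∈ S, Integrable (fun ω => α ^ 2 - 2 * α * m ω + c ω) P := fun P hP =>
      have := hprob P hP
      ((integrable_const _).sub ((hm P hP).const_mul _)).add (hc P hP)
    rw [← sSup_image_integral_convHullP hS hint, Set.image_image]
    refine congrArg sSup (Set.image_congr fun Q hQ => ?_)
    have := isProbabilityMeasure_of_mem_convHullP hprob hQ
    have := integrable_of_mem_convHullP hm hQ
    have := integrable_of_mem_convHullP hc hQ
    rw [integral_add (by fun_prop) (by fun_prop), integral_sub (by fun_prop) (by fun_prop),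
      integral_const_mul, integral_const, probReal_univ, one_smul]
  rw [iInf_congr hsup, iInf_sSup_image_quadratic (convex_image_integral_prod_convHullP hm hc)
    ((hS.mono subset_convHullP).image _) hC, Set.image_image]

lemma abs_integral_le_of_abs_le_mul_one_add {μ : Measure Ω} [IsProbabilityMeasure μ]
    {f G : Ω → ℝ} {k r : ℝ} (hk : 0 ≤ k) (hG : Integrable G μ) (hGr : ∫ ω, G ω ∂μ ≤ r)
    (hf : ∀ ω, |f ω| ≤ k * (1 + G ω)) : |∫ ω, f ω ∂μ| ≤ k * (1 + r) :=
  calc |∫ ω, f ω ∂μ| ≤ ∫ ω, k * (1 + G ω) ∂μ :=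
        norm_integral_le_of_norm_le (f := f) (((integrable_const 1).add hG).const_mul k)
          (ae_of_all _ hf)
    _ = k * (1 + ∫ ω, G ω ∂μ) := by
        rw [integral_const_mul, integral_add (integrable_const 1) hG, integral_const,
          probReal_univ, one_smul]
    _ ≤ k * (1 + r) := by gcongr

theorem sSup_image_covP_self_convHullP {S : Set (Measure Ω)} (hS : S.Nonempty)
    (hprob : ∀ P ∈ S, IsProbabilityMeasure P) {X : Ω → ℝ} (hX : ∀ P ∈ S, MemLp X 2 P) {B : ℝ}
    (hB : ∀ P ∈ S, ∫ ω, X ω ^ 2 ∂P ≤ B) :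
    sSup ((fun P => covP P X X) '' convHullP S) =
      ⨅ μ : ℝ, sSup ((fun P => ∫ ω, (X ω - μ) ^ 2 ∂P) '' S) := by
  have hX₁ : ∀ P ∈ S, Integrable X P := fun P hP =>
    have := hprob P hP
    (hX P hP).integrable one_le_two
  have hX₂ : ∀ P ∈ S, Integrable (fun ω => X ω ^ 2) P := fun P hP => (hX P hP).integrable_sq
  have hmean : ∀ P ∈ S, |∫ ω, X ω ∂P| ≤ 1 + B := fun P hP => by
    have := hprob P hP
    simpa using abs_integral_le_of_abs_le_mul_one_add zero_le_one (hX₂ P hP) (hB P hP)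
      fun ω => by
        rw [one_mul, abs_le]
        constructor <;> nlinarith [sq_nonneg (X ω + 1 / 2), sq_nonneg (X ω - 1 / 2)]
  calc sSup ((fun P => covP P X X) '' convHullP S)
      = sSup ((fun Q => ∫ ω, X ω ^ 2 ∂Q - (∫ ω, X ω ∂Q) ^ 2) '' convHullP S) := by
        simp only [covP, sq]
    _ = ⨅ μ : ℝ, sSup ((fun P => ∫ ω, (μ ^ 2 - 2 * μ * X ω + X ω ^ 2) ∂P) '' S) :=
        (iInf_sSup_image_integral_quadratic hS hprob hX₁ hX₂ (R := 1 + B) fun P hP =>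
          ⟨hmean P hP, (hB P hP).trans (le_add_of_nonneg_left zero_le_one)⟩).symm
    _ = ⨅ μ : ℝ, sSup ((fun P => ∫ ω, (X ω - μ) ^ 2 ∂P) '' S) :=
        iInf_congr fun μ => congrArg sSup (Set.image_congr fun P _ =>
          integral_congr_ae (ae_of_all _ fun ω => by ring))

section Covariance

variable {S : Set (Measure Ω)} {X Y : Ω → ℝ} {B : ℝ}

lemma integrable_moments_of_memLp (hprob : ∀ P ∈ S, IsProbabilityMeasure P)
    (hXY : ∀ P ∈ S, MemLp X 2 P ∧ MemLp Y 2 P) :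
    ∀ P ∈ S, Integrable X P ∧ Integrable Y P ∧ Integrable (fun ω => X ω * Y ω) P ∧
      Integrable (fun ω => X ω ^ 2 + Y ω ^ 2) P := fun P hP =>
  have := hprob P hP
  ⟨(hXY P hP).1.integrable one_le_two, (hXY P hP).2.integrable one_le_two,
    (hXY P hP).1.integrable_mul (hXY P hP).2,
    (hXY P hP).1.integrable_sq.add (hXY P hP).2.integrable_sq⟩

lemma bddAbove_image_covP_convHullP (hprob : ∀ P ∈ S, IsProbabilityMeasure P)
    (hXY : ∀ P ∈ S, MemLp X 2 P ∧ MemLp Y 2 P)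
    (hB : ∀ P ∈ S, ∫ ω, (X ω ^ 2 + Y ω ^ 2) ∂P ≤ B) :
    BddAbove ((fun Q => covP Q X Y) '' convHullP S) := by
  have hint := integrable_moments_of_memLp hprob hXY
  have hbound (f : Ω → ℝ) (hf : ∀ ω, |f ω| ≤ 1 + (X ω ^ 2 + Y ω ^ 2)) (P : Measure Ω)
      (hP : P ∈ S) : |∫ ω, f ω ∂P| ≤ 1 + B := by
    have := hprob P hP
    simpa using abs_integral_le_of_abs_le_mul_one_add zero_le_one (hint P hP).2.2.2 (hB P hP)
      fun ω => by rw [one_mul]; exact hf ω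
  refine ⟨(1 + B) + (1 + B) ^ 2, ?_⟩
  rintro _ ⟨Q, hQ, rfl⟩
  have hX := abs_le.1 <| abs_integral_le_of_mem_convHullP (fun P hP => (hint P hP).1)
    (hbound X fun ω => abs_le.2 ⟨by nlinarith [sq_nonneg (X ω + 1 / 2), sq_nonneg (Y ω)],
      by nlinarith [sq_nonneg (X ω - 1 / 2), sq_nonneg (Y ω)]⟩) hQ
  have hY := abs_le.1 <| abs_integral_le_of_mem_convHullP (fun P hP => (hint P hP).2.1)
    (hbound Y fun ω => abs_le.2 ⟨by nlinarith [sq_nonneg (Y ω + 1 / 2), sq_nonneg (X ω)],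
      by nlinarith [sq_nonneg (Y ω - 1 / 2), sq_nonneg (X ω)]⟩) hQ
  have hXY := abs_le.1 <| abs_integral_le_of_mem_convHullP (fun P hP => (hint P hP).2.2.1)
    (hbound _ fun ω => abs_le.2 ⟨by nlinarith [sq_nonneg (X ω + Y ω)],
      by nlinarith [sq_nonneg (X ω - Y ω)]⟩) hQ
  simp only [covP]
  nlinarith

theorem iInf_sSup_integral_sq_sub_sq (hS : S.Nonempty)
    (hprob : ∀ P ∈ S, IsProbabilityMeasure P) (hXY : ∀ P ∈ S, MemLp X 2 P ∧ MemLp Y 2 P)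
    (hB : ∀ P ∈ S, ∫ ω, (X ω ^ 2 + Y ω ^ 2) ∂P ≤ B) (β : ℝ) :
    ⨅ α : ℝ, sSup ((fun P =>
        ∫ ω, (((X ω + Y ω) / 2 - α) ^ 2 - ((X ω - Y ω) / 2 - β) ^ 2) ∂P) '' S) =
      sSup ((fun Q => covP Q X Y - ((∫ ω, X ω ∂Q - ∫ ω, Y ω ∂Q) / 2 - β) ^ 2) '' convHullP S) := by
  have hint := integrable_moments_of_memLp hprob hXY
  set c : Ω → ℝ := fun ω => X ω * Y ω + β * (X ω - Y ω) - β ^ 2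
  have hm : ∀ P ∈ S, Integrable (fun ω => (X ω + Y ω) / 2) P := fun P hP =>
    ((hint P hP).1.add (hint P hP).2.1).div_const 2
  have hc : ∀ P ∈ S, Integrable c P := fun P hP => by
    have := hprob P hP
    obtain ⟨_, _, _, _⟩ := hint P hP
    fun_prop
  have hk : 0 ≤ (1 + |β|) ^ 2 := sq_nonneg _
  have hbd : ∀ P ∈ S, |∫ ω, (X ω + Y ω) / 2 ∂P| ≤ (1 + |β|) ^ 2 * (1 + B) ∧
      ∫ ω, c ω ∂P ≤ (1 + |β|) ^ 2 * (1 + B) := by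
    intro P hP
    have := hprob P hP
    refine ⟨abs_integral_le_of_abs_le_mul_one_add hk (hint P hP).2.2.2 (hB P hP) fun ω => ?_,
      le_of_abs_le <| abs_integral_le_of_abs_le_mul_one_add hk (hint P hP).2.2.2 (hB P hP)
        fun ω => ?_⟩
    · have h1 : 1 ≤ (1 + |β|) ^ 2 := by nlinarith [abs_nonneg β]
      have h2 : |(X ω + Y ω) / 2| ≤ 1 + (X ω ^ 2 + Y ω ^ 2) := by
        rw [abs_le]
        constructor <;> nlinarith [sq_nonneg (X ω + 1 / 2), sq_nonneg (Y ω + 1 / 2),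
          sq_nonneg (X ω - 1 / 2), sq_nonneg (Y ω - 1 / 2)]
      nlinarith [sq_nonneg (X ω), sq_nonneg (Y ω)]
    · rw [abs_le]
      rcases abs_cases β with ⟨h, hb⟩ | ⟨h, hb⟩ <;> rw [h] <;> constructor <;>
        nlinarith [sq_nonneg (X ω + Y ω), sq_nonneg (X ω - Y ω), sq_nonneg (X ω - 1),
          sq_nonneg (Y ω - 1), sq_nonneg (X ω + 1), sq_nonneg (Y ω + 1), sq_nonneg β,
          mul_nonneg (sq_nonneg β) (add_nonneg (sq_nonneg (X ω)) (sq_nonneg (Y ω)))]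
  calc ⨅ α : ℝ, sSup ((fun P =>
        ∫ ω, (((X ω + Y ω) / 2 - α) ^ 2 - ((X ω - Y ω) / 2 - β) ^ 2) ∂P) '' S)
      = ⨅ α : ℝ, sSup ((fun P => ∫ ω, (α ^ 2 - 2 * α * ((X ω + Y ω) / 2) + c ω) ∂P) '' S) :=
        iInf_congr fun α => congrArg sSup (Set.image_congr fun P _ =>
          integral_congr_ae (ae_of_all _ fun ω => by simp only [c]; ring))
    _ = sSup ((fun Q => ∫ ω, c ω ∂Q - (∫ ω, (X ω + Y ω) / 2 ∂Q) ^ 2) '' convHullP S) :=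
        iInf_sSup_image_integral_quadratic hS hprob hm hc hbd
    _ = _ := by
        refine congrArg sSup (Set.image_congr fun Q hQ => ?_)
        have := isProbabilityMeasure_of_mem_convHullP hprob hQ
        have := integrable_of_mem_convHullP (fun P hP => (hint P hP).1) hQ
        have := integrable_of_mem_convHullP (fun P hP => (hint P hP).2.1) hQ
        have := integrable_of_mem_convHullP (fun P hP => (hint P hP).2.2.1) hQ
        simp only [c, covP]
        rw [integral_sub (by fun_prop) (by fun_prop), integral_add (by fun_prop) (by fun_prop),
          integral_const_mul, integral_sub (by fun_prop) (by fun_prop), integral_const,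
          integral_div, integral_add (by fun_prop) (by fun_prop), probReal_univ, one_smul]
        ring

end Covariance

theorem stmt17 (S : Set (Measure Ω)) (hS : S.Nonempty)
    (hprob : ∀ P ∈ S, IsProbabilityMeasure P) (X Y : Ω → ℝ)
    (hXY : ∀ P ∈ S, MemLp X 2 P ∧ MemLp Y 2 P)
    (hbdd : BddAbove ((fun P => (∫ ω, (X ω) ^ 2 ∂P) + ∫ ω, (Y ω) ^ 2 ∂P) '' S))
    (U V : Ω → ℝ) (hU : U = fun ω => (X ω + Y ω) / 2) (hV : V = fun ω => (X ω - Y ω) / 2) :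
    (sSup ((fun P => covP P X Y) '' convHullP S) =
      ⨆ β : ℝ, ⨅ α : ℝ,
        sSup ((fun P => ∫ ω, ((U ω - α) ^ 2 - (V ω - β) ^ 2) ∂P) '' S)) ∧
    (sSup ((fun P => covP P X X) '' convHullP S) =
      ⨅ μ : ℝ, sSup ((fun P => ∫ ω, (X ω - μ) ^ 2 ∂P) '' S)) := by
  obtain ⟨B, hB⟩ := hbdd
  have hB' : ∀ P ∈ S, ∫ ω, (X ω ^ 2 + Y ω ^ 2) ∂P ≤ B := fun P hP => by
    rw [integral_add (hXY P hP).1.integrable_sq (hXY P hP).2.integrable_sq]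
    exact hB ⟨P, hP, rfl⟩
  refine ⟨?_, sSup_image_covP_self_convHullP hS hprob (fun P hP => (hXY P hP).1)
    fun P hP => (le_add_of_nonneg_right (integral_nonneg fun ω => sq_nonneg (Y ω))).trans
      (hB ⟨P, hP, rfl⟩)⟩
  subst hU hV
  rw [← iSup_sSup_image_sub_sq (hS.mono subset_convHullP)
    (bddAbove_image_covP_convHullP hprob hXY hB') fun Q => (∫ ω, X ω ∂Q - ∫ ω, Y ω ∂Q) / 2]
  exact iSup_congr fun β => (iInf_sSup_integral_sq_sub_sq hS hprob hXY hB' β).symm
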